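/- (Lemma 3.13.) Let ℓ ≥ 2, n ≥ 1, 𝔾 = (ℤ/ℓℤ)^n, and let i, j ∈ {0,…,n} be such that i + j ∈ {0,…,n}. Then for every f : 𝔖(𝔾) → ℝ: ℰ^IP_{ρ_{i+j}}(f) ≤ (8·|𝔾_i| / min(|𝔾_i|,|𝔾_j|)) · ℰ^IP_{ρ_i}(f) + (8·|𝔾_j| / min(|𝔾_i|,|𝔾_j|)) · ℰ^IP_{ρ_j}(f). -/

import Mathlib

set_option linter.unusedSectionVars false
set_option maxHeartbeats 1000000


open Finset

/-- The group `(ℤ/ℓℤ)^n`. -/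
abbrev GG (ℓ n : ℕ) : Type := Fin n → ZMod ℓ

/-- The Dirichlet form of the interchange process on `𝔾 = (ℤ/ℓℤ)^n` with increment
law `μ`. -/
noncomputable def ipFormG (ℓ n : ℕ) [NeZero ℓ] (μ : GG ℓ n → ℝ)
    (f : Equiv.Perm (GG ℓ n) → ℝ) : ℝ :=
  (1 / (2 * (Nat.factorial (Fintype.card (GG ℓ n)) : ℝ))) *
    ∑ σ : Equiv.Perm (GG ℓ n), ∑ x : GG ℓ n, ∑ z : GG ℓ n,
      μ z * (f (σ * Equiv.swap x (x + z)) - f σ) ^ 2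

/-- Convolution of two measures on `(ℤ/ℓℤ)^n`. -/
noncomputable def conv {ℓ n : ℕ} [NeZero ℓ] (μ ν : GG ℓ n → ℝ) : GG ℓ n → ℝ :=
  fun x => ∑ z : GG ℓ n, μ z * ν (x - z)

/-- `m`-fold self-convolution: `convIter μ 0` is the Dirac mass at `0` and
`convIter μ (m+1) = μ ⋆ convIter μ m`; in particular `convIter μ 1 = μ`. -/
noncomputable def convIter {ℓ n : ℕ} [NeZero ℓ] (μ : GG ℓ n → ℝ) : ℕ → (GG ℓ n → ℝ)
  | 0 => fun x => if x = 0 then 1 else 0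
  | (m + 1) => conv μ (convIter μ m)

/-- The number of nonzero coordinates of `x`. -/
def suppCard {ℓ n : ℕ} (x : GG ℓ n) : ℕ :=
  (Finset.univ.filter fun i => x i ≠ 0).card

/-- `ρ_k`, the uniform probability measure on the set of elements of `(ℤ/ℓℤ)^n`
with exactly `k` nonzero coordinates. -/
noncomputable def rho (ℓ n : ℕ) [NeZero ℓ] (k : ℕ) : GG ℓ n → ℝ :=
  fun x => if suppCard x = k
    then 1 / ((Finset.univ.filter fun y : GG ℓ n => suppCard y = k).card : ℝ)
    else 0

/-- `π`, the uniform probability measure on `(ℤ/ℓℤ)^n`. -/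
noncomputable def unifG (ℓ n : ℕ) [NeZero ℓ] : GG ℓ n → ℝ :=
  fun _ => 1 / (Fintype.card (GG ℓ n) : ℝ)

/-- The cardinality of `𝔾_k`, the set of elements of `(ℤ/ℓℤ)^n` with exactly `k`
nonzero coordinates. -/
noncomputable def GkCard (ℓ n k : ℕ) [NeZero ℓ] : ℕ :=
  (Finset.univ.filter fun y : GG ℓ n => suppCard y = k).card

section AuxT
variable {ℓ n : ℕ} [NeZero ℓ]

noncomputable def Tsum (f : Equiv.Perm (GG ℓ n) → ℝ) (w : GG ℓ n) : ℝ :=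
  ∑ σ : Equiv.Perm (GG ℓ n), ∑ x : GG ℓ n, (f (σ * Equiv.swap x (x + w)) - f σ) ^ 2

lemma Tsum_nonneg (f : Equiv.Perm (GG ℓ n) → ℝ) (w : GG ℓ n) : 0 ≤ Tsum f w :=
  Finset.sum_nonneg fun _ _ => Finset.sum_nonneg fun _ _ => sq_nonneg _

lemma Tsum_zero (f : Equiv.Perm (GG ℓ n) → ℝ) : Tsum f (0 : GG ℓ n) = 0 := by
  simp [Tsum, Equiv.swap_self, ← Equiv.Perm.one_def]

lemma Tsum_add_le (f : Equiv.Perm (GG ℓ n) → ℝ) {u v : GG ℓ n} (hu : u ≠ 0) (hv : v ≠ 0)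
    (huv : u + v ≠ 0) : Tsum f (u + v) ≤ 6 * Tsum f u + 3 * Tsum f v := by
  have key : ∀ x : GG ℓ n,
      (∑ σ : Equiv.Perm (GG ℓ n), (f (σ * Equiv.swap x (x + (u + v))) - f σ) ^ 2)
      ≤ 6 * (∑ σ : Equiv.Perm (GG ℓ n), (f (σ * Equiv.swap x (x + u)) - f σ) ^ 2)
        + 3 * (∑ σ : Equiv.Perm (GG ℓ n),
            (f (σ * Equiv.swap (x + u) (x + u + v)) - f σ) ^ 2) := by
    intro x
    set s1 := Equiv.swap x (x + u) with hs1
    set s2 := Equiv.swap (x + u) (x + u + v) with hs2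
    have hxu : x + u ≠ x := fun h => hu (by simpa using congrArg (· - x) (by simpa [add_comm] using h))
    have hxuv : x + u + v ≠ x + u := fun h => hv (by simpa using congrArg (· - (x + u)) h)
    have hxuvx : x + u + v ≠ x := by
      rw [add_assoc]
      exact fun h => huv (by simpa using congrArg (· - x) (by simpa [add_comm] using h))
    have hd : s1 * s2 * s1 = Equiv.swap x (x + (u + v)) := by
      have h1 : s1 (x + u) = x := Equiv.swap_apply_right _ _
      have h2 : s1 (x + u + v) = x + u + v := Equiv.swap_apply_of_ne_of_ne hxuvx hxuv
      have hinv : s1⁻¹ = s1 := Equiv.swap_inv _ _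
      calc s1 * s2 * s1 = s1 * s2 * s1⁻¹ := by rw [hinv]
        _ = Equiv.swap (s1 (x + u)) (s1 (x + u + v)) := (Equiv.swap_apply_apply s1 _ _).symm
        _ = Equiv.swap x (x + (u + v)) := by rw [h1, h2, add_assoc]
    have step : (∑ σ : Equiv.Perm (GG ℓ n), (f (σ * Equiv.swap x (x + (u + v))) - f σ) ^ 2)
        ≤ ∑ σ : Equiv.Perm (GG ℓ n),
            (3 * (f (σ * (s1 * s2) * s1) - f (σ * (s1 * s2))) ^ 2
            + 3 * (f (σ * s1 * s2) - f (σ * s1)) ^ 2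
            + 3 * (f (σ * s1) - f σ) ^ 2) := by
      apply Finset.sum_le_sum
      intro σ _
      rw [← hd]
      have e1 : σ * (s1 * s2 * s1) = σ * (s1 * s2) * s1 := by group
      have e2 : σ * s1 * s2 = σ * (s1 * s2) := by group
      rw [e1]
      set A := f (σ * (s1 * s2) * s1) - f (σ * (s1 * s2)) with hA
      set B := f (σ * s1 * s2) - f (σ * s1) with hB
      set C := f (σ * s1) - f σ with hC
      have : f (σ * (s1 * s2) * s1) - f σ = A + B + C := by rw [hA, hB, hC, e2]; ring
      rw [this]
      nlinarith [sq_nonneg (A - B), sq_nonneg (B - C), sq_nonneg (A - C)]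
    have r1 : ∑ σ : Equiv.Perm (GG ℓ n), (f (σ * (s1 * s2) * s1) - f (σ * (s1 * s2))) ^ 2
        = ∑ σ : Equiv.Perm (GG ℓ n), (f (σ * s1) - f σ) ^ 2 :=
      Fintype.sum_equiv (Equiv.mulRight (s1 * s2)) _ _ (fun σ => by simp [mul_assoc])
    have r2 : ∑ σ : Equiv.Perm (GG ℓ n), (f (σ * s1 * s2) - f (σ * s1)) ^ 2
        = ∑ σ : Equiv.Perm (GG ℓ n), (f (σ * s2) - f σ) ^ 2 :=
      Fintype.sum_equiv (Equiv.mulRight s1) _ _ (fun σ => by simp)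
    calc (∑ σ : Equiv.Perm (GG ℓ n), (f (σ * Equiv.swap x (x + (u + v))) - f σ) ^ 2)
        ≤ _ := step
      _ = 3 * (∑ σ : Equiv.Perm (GG ℓ n), (f (σ * (s1 * s2) * s1) - f (σ * (s1 * s2))) ^ 2)
          + 3 * (∑ σ : Equiv.Perm (GG ℓ n), (f (σ * s1 * s2) - f (σ * s1)) ^ 2)
          + 3 * (∑ σ : Equiv.Perm (GG ℓ n), (f (σ * s1) - f σ) ^ 2) := by
            rw [Finset.sum_add_distrib, Finset.sum_add_distrib, ← Finset.mul_sum,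
              ← Finset.mul_sum, ← Finset.mul_sum]
      _ = 6 * (∑ σ : Equiv.Perm (GG ℓ n), (f (σ * s1) - f σ) ^ 2)
          + 3 * (∑ σ : Equiv.Perm (GG ℓ n), (f (σ * s2) - f σ) ^ 2) := by
            rw [r1, r2]; ring
  rw [Tsum, Finset.sum_comm]
  calc ∑ x : GG ℓ n, ∑ σ : Equiv.Perm (GG ℓ n), (f (σ * Equiv.swap x (x + (u + v))) - f σ) ^ 2
      ≤ ∑ x : GG ℓ n,
          (6 * (∑ σ : Equiv.Perm (GG ℓ n), (f (σ * Equiv.swap x (x + u)) - f σ) ^ 2)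
          + 3 * (∑ σ : Equiv.Perm (GG ℓ n),
              (f (σ * Equiv.swap (x + u) (x + u + v)) - f σ) ^ 2)) :=
        Finset.sum_le_sum fun x _ => key x
    _ = 6 * Tsum f u + 3 * Tsum f v := by
        rw [Finset.sum_add_distrib, ← Finset.mul_sum, ← Finset.mul_sum]
        congr 1
        · rw [Tsum, Finset.sum_comm]
        · congr 1
          calc ∑ x : GG ℓ n, ∑ σ : Equiv.Perm (GG ℓ n),
                (f (σ * Equiv.swap (x + u) (x + u + v)) - f σ) ^ 2
              = ∑ y : GG ℓ n, ∑ σ : Equiv.Perm (GG ℓ n),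
                (f (σ * Equiv.swap y (y + v)) - f σ) ^ 2 :=
              Fintype.sum_equiv (Equiv.addRight u) _ _ (fun x => by simp)
            _ = Tsum f v := by rw [Tsum, Finset.sum_comm]

end AuxT

section AuxCount
variable {ℓ n : ℕ} [NeZero ℓ]

def supp (x : GG ℓ n) : Finset (Fin n) := Finset.univ.filter fun k => x k ≠ 0

lemma suppCard_eq (x : GG ℓ n) : suppCard x = (supp x).card := rfl

lemma mem_supp {x : GG ℓ n} {k : Fin n} : k ∈ supp x ↔ x k ≠ 0 := by simp [supp]

lemma suppCard_eq_zero {x : GG ℓ n} : suppCard x = 0 ↔ x = 0 := by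
  simp [suppCard, Finset.filter_eq_empty_iff, funext_iff]

lemma supp_add_eq {u v : GG ℓ n} (h : Disjoint (supp u) (supp v)) :
    supp (u + v) = supp u ∪ supp v := by
  ext k
  by_cases hu : u k = 0 <;> by_cases hv : v k = 0 <;>
    simp [mem_supp, Finset.mem_union, hu, hv]
  exact absurd (Finset.disjoint_left.mp h (mem_supp.mpr hu)) (by simp [mem_supp, hv])

lemma suppCard_add {u v : GG ℓ n} (h : Disjoint (supp u) (supp v)) :
    suppCard (u + v) = suppCard u + suppCard v := by
  rw [suppCard_eq, supp_add_eq h, Finset.card_union_of_disjoint h]; rfl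

def Gkset (ℓ n k : ℕ) [NeZero ℓ] : Finset (GG ℓ n) :=
  Finset.univ.filter fun y => suppCard y = k

lemma mem_Gkset {k : ℕ} {x : GG ℓ n} : x ∈ Gkset ℓ n k ↔ suppCard x = k := by simp [Gkset]

lemma card_filter_val_lt {k : ℕ} (h : k ≤ n) :
    (Finset.univ.filter fun m : Fin n => (m : ℕ) < k).card = k := by
  rcases eq_or_lt_of_le h with rfl | h
  · rw [Finset.filter_true_of_mem fun m _ => m.isLt]
    simp
  · have : (Finset.univ.filter fun m : Fin n => (m : ℕ) < k) = Finset.Iio (⟨k, h⟩ : Fin n) := by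
      ext m; simp [Fin.lt_def]
    rw [this, Fin.card_Iio]

lemma Gkset_nonempty (hℓ : 2 ≤ ℓ) {k : ℕ} (hk : k ≤ n) : (Gkset ℓ n k).Nonempty := by
  haveI : Fact (1 < ℓ) := ⟨hℓ⟩
  refine ⟨fun m => if (m : ℕ) < k then 1 else 0, ?_⟩
  rw [mem_Gkset, suppCard]
  have : (Finset.univ.filter fun m : Fin n => ((if (m : ℕ) < k then (1 : ZMod ℓ) else 0) ≠ 0))
      = Finset.univ.filter fun m : Fin n => (m : ℕ) < k := by
    ext m; by_cases h : (m : ℕ) < k <;> simp [h, one_ne_zero]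
  rw [this, card_filter_val_lt hk]

end AuxCount

section AuxFiber
variable {ℓ n : ℕ} [NeZero ℓ]

/-- The set of decompositions `z = u + v` with disjoint supports of sizes `i`, `j`. -/
def Pset (ℓ n i j : ℕ) [NeZero ℓ] : Finset (GG ℓ n × GG ℓ n) :=
  ((Gkset ℓ n i) ×ˢ (Gkset ℓ n j)).filter fun p => Disjoint (supp p.1) (supp p.2)

lemma mem_Pset {i j : ℕ} {p : GG ℓ n × GG ℓ n} :
    p ∈ Pset ℓ n i j ↔ suppCard p.1 = i ∧ suppCard p.2 = j ∧ Disjoint (supp p.1) (supp p.2) := by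
  simp [Pset, Finset.mem_filter, Finset.mem_product, mem_Gkset, and_assoc]

lemma Pset_maps_to {i j : ℕ} : ∀ p ∈ Pset ℓ n i j, p.1 + p.2 ∈ Gkset ℓ n (i + j) := by
  intro p hp
  obtain ⟨h1, h2, hd⟩ := mem_Pset.mp hp
  rw [mem_Gkset, suppCard_add hd, h1, h2]

lemma fiber_card_z {i j : ℕ} {z : GG ℓ n} (hz : suppCard z = i + j) :
    ((Pset ℓ n i j).filter fun p => p.1 + p.2 = z).card = (i + j).choose i := by
  have hcz : (supp z).card = i + j := hz
  rw [← hcz, ← Finset.card_powersetCard]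
  apply Finset.card_bij' (fun p _ => supp p.1)
    (fun A _ => ((fun k => if k ∈ A then z k else 0), (fun k => if k ∈ A then 0 else z k)))
  · -- forward maps into powersetCard
    intro p hp
    rw [Finset.mem_filter] at hp
    obtain ⟨hP, hsum⟩ := hp
    obtain ⟨h1, h2, hd⟩ := mem_Pset.mp hP
    rw [Finset.mem_powersetCard]
    constructor
    · intro k hk
      rw [mem_supp] at hk ⊢
      have hv : p.2 k = 0 := by
        by_contra hvk
        exact (Finset.disjoint_left.mp hd (mem_supp.mpr hk)) (mem_supp.mpr hvk)
      rw [← hsum]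
      simpa [hv] using hk
    · exact h1
  · -- backward maps into fiber
    intro A hA
    rw [Finset.mem_powersetCard] at hA
    obtain ⟨hAz, hAi⟩ := hA
    have hsu : supp (fun k => if k ∈ A then z k else (0 : ZMod ℓ)) = A := by
      ext k
      rw [mem_supp]
      by_cases h : k ∈ A
      · simpa [h] using fun hzk => absurd (hAz h) (by simp [mem_supp, hzk])
      · simp [h]
    have hsv : supp (fun k => if k ∈ A then (0 : ZMod ℓ) else z k) = supp z \ A := by
      ext k
      rw [mem_supp]
      by_cases h : k ∈ A <;> simp [h, mem_supp]
    rw [Finset.mem_filter, mem_Pset]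
    refine ⟨⟨?_, ?_, ?_⟩, ?_⟩
    · rw [suppCard_eq, hsu, hAi]
    · rw [suppCard_eq, hsv, Finset.card_sdiff_of_subset hAz, hcz, hAi, Nat.add_sub_cancel_left]
    · rw [hsu, hsv]; exact Finset.disjoint_sdiff
    · funext k
      by_cases h : k ∈ A <;> simp [h]
  · -- left inverse
    intro p hp
    rw [Finset.mem_filter] at hp
    obtain ⟨hP, hsum⟩ := hp
    obtain ⟨h1, h2, hd⟩ := mem_Pset.mp hP
    have hzk : ∀ k, k ∈ supp p.1 → z k = p.1 k := by
      intro k hk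
      have hv : p.2 k = 0 := by
        by_contra hvk
        exact (Finset.disjoint_left.mp hd hk) (mem_supp.mpr hvk)
      rw [← hsum]; simp [hv]
    have e1 : (fun k => if k ∈ supp p.1 then z k else (0 : ZMod ℓ)) = p.1 := by
      funext k
      by_cases h : k ∈ supp p.1
      · rw [if_pos h, hzk k h]
      · rw [if_neg h]
        exact (not_not.mp (fun hc => h (mem_supp.mpr hc))).symm
    have e2 : (fun k => if k ∈ supp p.1 then (0 : ZMod ℓ) else z k) = p.2 := by
      funext k
      by_cases h : k ∈ supp p.1
      · rw [if_pos h]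
        exact ((not_not.mp (fun hc => (Finset.disjoint_left.mp hd h) (mem_supp.mpr hc)))).symm
      · rw [if_neg h, ← hsum]
        have : p.1 k = 0 := not_not.mp (fun hc => h (mem_supp.mpr hc))
        simp [this]
    exact Prod.ext e1 e2
  · -- right inverse
    intro A hA
    rw [Finset.mem_powersetCard] at hA
    obtain ⟨hAz, _⟩ := hA
    ext k
    rw [mem_supp]
    by_cases h : k ∈ A
    · simpa [h] using fun hzk => absurd (hAz h) (by simp [mem_supp, hzk])
    · simp [h]

end AuxFiber

section AuxConst
variable {ℓ n : ℕ} [NeZero ℓ]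

lemma exists_perm_supp {u u' : GG ℓ n} (h : (supp u).card = (supp u').card) :
    ∃ π : Equiv.Perm (Fin n), ∀ k, π k ∈ supp u' ↔ k ∈ supp u := by
  have hc : ((supp u)ᶜ : Finset (Fin n)).card = ((supp u')ᶜ : Finset (Fin n)).card := by
    rw [Finset.card_compl, Finset.card_compl, h]
  let e : {x // x ∈ supp u} ≃ {x // x ∈ supp u'} := Finset.equivOfCardEq h
  let e' : {x // x ∈ ((supp u)ᶜ : Finset (Fin n))} ≃ {x // x ∈ ((supp u')ᶜ : Finset (Fin n))} :=
    Finset.equivOfCardEq hc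
  let f : {x // ¬x ∈ supp u} ≃ {x // ¬x ∈ supp u'} :=
    ((Equiv.subtypeEquivRight (fun x => (Finset.mem_compl (s := supp u)).symm)).trans e').trans
      (Equiv.subtypeEquivRight (fun x => Finset.mem_compl (s := supp u')))
  refine ⟨Equiv.subtypeCongr e f, fun k => ?_⟩
  by_cases hk : k ∈ supp u
  · have hval : Equiv.subtypeCongr e f k = ↑(e ⟨k, hk⟩) := by
      simp [Equiv.subtypeCongr, Equiv.sumCompl_symm_apply_of_pos hk]
    rw [hval]
    exact iff_of_true (e ⟨k, hk⟩).2 hk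
  · have hval : Equiv.subtypeCongr e f k = ↑(f ⟨k, hk⟩) := by
      simp [Equiv.subtypeCongr, Equiv.sumCompl_symm_apply_of_neg hk]
    rw [hval]
    exact iff_of_false (f ⟨k, hk⟩).2 hk

lemma Ncard_const {jj : ℕ} {u u' : GG ℓ n} (h : suppCard u = suppCard u') :
    ((Gkset ℓ n jj).filter fun v => Disjoint (supp u) (supp v)).card =
    ((Gkset ℓ n jj).filter fun v => Disjoint (supp u') (supp v)).card := by
  obtain ⟨π, hπ⟩ := exists_perm_supp (u := u) (u' := u') h
  have hπ' : ∀ k, π.symm k ∈ supp u ↔ k ∈ supp u' := by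
    intro k
    conv_rhs => rw [← π.apply_symm_apply k]
    exact (hπ (π.symm k)).symm
  have hsupp : ∀ (ρ : Equiv.Perm (Fin n)) (v : GG ℓ n),
      supp (fun k => v (ρ.symm k)) = (supp v).image ρ := by
    intro ρ v
    ext k
    simp only [mem_supp, Finset.mem_image]
    constructor
    · intro hk
      exact ⟨ρ.symm k, hk, by simp⟩
    · rintro ⟨m, hm, rfl⟩
      simpa using hm
  have hcard : ∀ (ρ : Equiv.Perm (Fin n)) (v : GG ℓ n),
      suppCard (fun k => v (ρ.symm k)) = suppCard v := by
    intro ρ v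
    rw [suppCard_eq, hsupp, Finset.card_image_of_injective _ ρ.injective, suppCard_eq]
  apply Finset.card_bij' (fun v _ => fun k => v (π.symm k)) (fun w _ => fun k => w (π k))
  · intro v hv
    rw [Finset.mem_filter, mem_Gkset] at hv ⊢
    refine ⟨(hcard π v).trans hv.1, ?_⟩
    rw [hsupp, Finset.disjoint_left]
    intro k hk
    simp only [Finset.mem_image]
    rintro ⟨m, hm, rfl⟩
    exact Finset.disjoint_left.mp hv.2 (hπ m |>.mp hk) hm
  · intro w hw
    rw [Finset.mem_filter, mem_Gkset] at hw ⊢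
    have h1 : suppCard (fun k => w (π k)) = jj := by
      have := hcard π.symm w
      simpa using this.trans hw.1
    refine ⟨h1, ?_⟩
    have hs : supp (fun k => w (π k)) = (supp w).image π.symm := by
      have := hsupp π.symm w
      simpa using this
    rw [hs, Finset.disjoint_left]
    intro k hk
    simp only [Finset.mem_image]
    rintro ⟨m, hm, rfl⟩
    exact Finset.disjoint_left.mp hw.2 (hπ' m |>.mp hk) hm
  · intro v _; funext k; simp
  · intro w _; funext k; simp

end AuxConst

section AuxSums
variable {ℓ n : ℕ} [NeZero ℓ]

lemma sum_Pset_add (i j : ℕ) (g : GG ℓ n → ℝ) :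
    ∑ p ∈ Pset ℓ n i j, g (p.1 + p.2)
      = ((i + j).choose i : ℝ) * ∑ z ∈ Gkset ℓ n (i + j), g z := by
  rw [← Finset.sum_fiberwise_of_maps_to' Pset_maps_to g, Finset.mul_sum]
  apply Finset.sum_congr rfl
  intro z hz
  rw [Finset.sum_const, nsmul_eq_mul, fiber_card_z (mem_Gkset.mp hz)]

lemma sum_Pset_fst (i j : ℕ) (g : GG ℓ n → ℝ) :
    ∑ p ∈ Pset ℓ n i j, g p.1
      = ∑ u ∈ Gkset ℓ n i,
          (((Gkset ℓ n j).filter fun v => Disjoint (supp u) (supp v)).card : ℝ) * g u := by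
  rw [Pset, Finset.sum_filter, Finset.sum_product]
  apply Finset.sum_congr rfl
  intro u _
  rw [← Finset.sum_filter (fun v => Disjoint (supp u) (supp v)) (fun _ => g u),
    Finset.sum_const, nsmul_eq_mul]

lemma sum_Pset_snd (i j : ℕ) (g : GG ℓ n → ℝ) :
    ∑ p ∈ Pset ℓ n i j, g p.2
      = ∑ v ∈ Gkset ℓ n j,
          (((Gkset ℓ n i).filter fun u => Disjoint (supp u) (supp v)).card : ℝ) * g v := by
  rw [Pset, Finset.sum_filter, Finset.sum_product_right]
  apply Finset.sum_congr rfl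
  intro v _
  rw [← Finset.sum_filter (fun u => Disjoint (supp u) (supp v)) (fun _ => g v),
    Finset.sum_const, nsmul_eq_mul]

lemma main_ineq (hℓ : 2 ≤ ℓ) {i j : ℕ} (hi1 : 1 ≤ i) (hj1 : 1 ≤ j) (hij : i + j ≤ n)
    (f : Equiv.Perm (GG ℓ n) → ℝ) :
    ((Gkset ℓ n (i + j)).card : ℝ)⁻¹ * ∑ z ∈ Gkset ℓ n (i + j), Tsum f z
      ≤ 6 * (((Gkset ℓ n i).card : ℝ)⁻¹ * ∑ u ∈ Gkset ℓ n i, Tsum f u)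
        + 3 * (((Gkset ℓ n j).card : ℝ)⁻¹ * ∑ v ∈ Gkset ℓ n j, Tsum f v) := by
  obtain ⟨u₀, hu₀⟩ := Gkset_nonempty (n := n) hℓ (le_trans (Nat.le_add_right i j) hij)
  obtain ⟨v₀, hv₀⟩ := Gkset_nonempty (n := n) hℓ (le_trans (Nat.le_add_left j i) hij)
  set C : ℝ := ((i + j).choose i : ℝ) with hC
  set ci : ℕ := ((Gkset ℓ n j).filter fun v => Disjoint (supp u₀) (supp v)).card with hcidef
  set cj : ℕ := ((Gkset ℓ n i).filter fun u => Disjoint (supp u) (supp v₀)).card with hcjdef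
  set Sz := ∑ z ∈ Gkset ℓ n (i + j), Tsum f z with hSz
  set Si := ∑ u ∈ Gkset ℓ n i, Tsum f u with hSi
  set Sj := ∑ v ∈ Gkset ℓ n j, Tsum f v with hSj
  -- fiber-count identities specialised via constancy
  have hfst : ∀ g : GG ℓ n → ℝ, ∑ p ∈ Pset ℓ n i j, g p.1
      = (ci : ℝ) * ∑ u ∈ Gkset ℓ n i, g u := by
    intro g
    rw [sum_Pset_fst, Finset.mul_sum]
    apply Finset.sum_congr rfl
    intro u hu
    congr 2
    exact Ncard_const ((mem_Gkset.mp hu).trans (mem_Gkset.mp hu₀).symm)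
  have hsnd : ∀ g : GG ℓ n → ℝ, ∑ p ∈ Pset ℓ n i j, g p.2
      = (cj : ℝ) * ∑ v ∈ Gkset ℓ n j, g v := by
    intro g
    rw [sum_Pset_snd, Finset.mul_sum]
    apply Finset.sum_congr rfl
    intro v hv
    congr 2
    have h1 : ((Gkset ℓ n i).filter fun u => Disjoint (supp u) (supp v)).card
        = ((Gkset ℓ n i).filter fun u => Disjoint (supp v) (supp u)).card := by
      congr 1; apply Finset.filter_congr; intro u _; simp [disjoint_comm]
    have h2 : cj = ((Gkset ℓ n i).filter fun u => Disjoint (supp v₀) (supp u)).card := by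
      rw [hcjdef]; congr 1; apply Finset.filter_congr; intro u _; simp [disjoint_comm]
    rw [h1, h2]
    exact Ncard_const ((mem_Gkset.mp hv).trans (mem_Gkset.mp hv₀).symm)
  -- step A
  have hA : ∑ p ∈ Pset ℓ n i j, Tsum f (p.1 + p.2)
      ≤ 6 * ∑ p ∈ Pset ℓ n i j, Tsum f p.1 + 3 * ∑ p ∈ Pset ℓ n i j, Tsum f p.2 := by
    rw [Finset.mul_sum, Finset.mul_sum, ← Finset.sum_add_distrib]
    apply Finset.sum_le_sum
    intro p hp
    obtain ⟨h1, h2, hd⟩ := mem_Pset.mp hp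
    have hu : p.1 ≠ 0 := fun h => by
      rw [h] at h1; rw [suppCard_eq_zero.mpr rfl] at h1; omega
    have hv : p.2 ≠ 0 := fun h => by
      rw [h] at h2; rw [suppCard_eq_zero.mpr rfl] at h2; omega
    have huv : p.1 + p.2 ≠ 0 := fun h => by
      have := suppCard_add hd
      rw [h, suppCard_eq_zero.mpr rfl, h1, h2] at this; omega
    exact Tsum_add_le f hu hv huv
  have hB : ∑ p ∈ Pset ℓ n i j, Tsum f (p.1 + p.2) = C * Sz := sum_Pset_add i j (Tsum f)
  have hB1 : ((Pset ℓ n i j).card : ℝ) = C * ((Gkset ℓ n (i + j)).card : ℝ) := by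
    simpa using sum_Pset_add (ℓ := ℓ) (n := n) i j (fun _ => (1 : ℝ))
  have hC1 : ((Pset ℓ n i j).card : ℝ) = (ci : ℝ) * ((Gkset ℓ n i).card : ℝ) := by
    simpa using hfst (fun _ => (1 : ℝ))
  have hC2 : ((Pset ℓ n i j).card : ℝ) = (cj : ℝ) * ((Gkset ℓ n j).card : ℝ) := by
    simpa using hsnd (fun _ => (1 : ℝ))
  have key : C * Sz ≤ 6 * ((ci : ℝ) * Si) + 3 * ((cj : ℝ) * Sj) := by
    rw [← hB, ← hfst (Tsum f), ← hsnd (Tsum f)]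
    exact hA
  have hgz : (0 : ℝ) < ((Gkset ℓ n (i + j)).card : ℝ) := by
    exact_mod_cast Finset.card_pos.mpr (Gkset_nonempty hℓ hij)
  have hgi : (0 : ℝ) < ((Gkset ℓ n i).card : ℝ) := by
    exact_mod_cast Finset.card_pos.mpr ⟨u₀, hu₀⟩
  have hgj : (0 : ℝ) < ((Gkset ℓ n j).card : ℝ) := by
    exact_mod_cast Finset.card_pos.mpr ⟨v₀, hv₀⟩
  have hCpos : (0 : ℝ) < C := by
    rw [hC]; exact_mod_cast Nat.choose_pos (Nat.le_add_right i j)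
  set gz : ℝ := ((Gkset ℓ n (i + j)).card : ℝ)
  set gi : ℝ := ((Gkset ℓ n i).card : ℝ)
  set gj : ℝ := ((Gkset ℓ n j).card : ℝ)
  have hKpos : (0 : ℝ) < C * gz := mul_pos hCpos hgz
  apply le_of_mul_le_mul_left _ hKpos
  have e1 : C * gz * (gz⁻¹ * Sz) = C * Sz := by
    field_simp
  have hci : C * gz = (ci : ℝ) * gi := hB1.symm.trans hC1
  have hcj : C * gz = (cj : ℝ) * gj := hB1.symm.trans hC2
  have hgi' : gi ≠ 0 := ne_of_gt hgi
  have hgj' : gj ≠ 0 := ne_of_gt hgj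
  have t1 : C * gz * (gi⁻¹ * Si) = (ci : ℝ) * Si := by
    rw [hci]
    field_simp
  have t2 : C * gz * (gj⁻¹ * Sj) = (cj : ℝ) * Sj := by
    rw [hcj]
    field_simp
  have e2 : C * gz * (6 * (gi⁻¹ * Si) + 3 * (gj⁻¹ * Sj))
      = 6 * ((ci : ℝ) * Si) + 3 * ((cj : ℝ) * Sj) := by
    calc C * gz * (6 * (gi⁻¹ * Si) + 3 * (gj⁻¹ * Sj))
        = 6 * (C * gz * (gi⁻¹ * Si)) + 3 * (C * gz * (gj⁻¹ * Sj)) := by ring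
      _ = 6 * ((ci : ℝ) * Si) + 3 * ((cj : ℝ) * Sj) := by rw [t1, t2]
  rw [e1, e2]
  exact key

end AuxSums

section AuxForm
variable {ℓ n : ℕ} [NeZero ℓ]

lemma ipFormG_eq_sum (μ : GG ℓ n → ℝ) (f : Equiv.Perm (GG ℓ n) → ℝ) :
    ipFormG ℓ n μ f = (1 / (2 * (Nat.factorial (Fintype.card (GG ℓ n)) : ℝ))) *
      ∑ z : GG ℓ n, μ z * Tsum f z := by
  rw [ipFormG]
  congr 1
  calc ∑ σ : Equiv.Perm (GG ℓ n), ∑ x : GG ℓ n, ∑ z : GG ℓ n,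
        μ z * (f (σ * Equiv.swap x (x + z)) - f σ) ^ 2
      = ∑ σ : Equiv.Perm (GG ℓ n), ∑ z : GG ℓ n, ∑ x : GG ℓ n,
        μ z * (f (σ * Equiv.swap x (x + z)) - f σ) ^ 2 :=
        Finset.sum_congr rfl fun σ _ => Finset.sum_comm
    _ = ∑ z : GG ℓ n, ∑ σ : Equiv.Perm (GG ℓ n), ∑ x : GG ℓ n,
        μ z * (f (σ * Equiv.swap x (x + z)) - f σ) ^ 2 := Finset.sum_comm
    _ = ∑ z : GG ℓ n, μ z * Tsum f z := by
        apply Finset.sum_congr rfl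
        intro z _
        rw [Tsum, Finset.mul_sum]
        apply Finset.sum_congr rfl
        intro σ _
        rw [Finset.mul_sum]

lemma ipFormG_rho_eq (k : ℕ) (f : Equiv.Perm (GG ℓ n) → ℝ) :
    ipFormG ℓ n (rho ℓ n k) f = (1 / (2 * (Nat.factorial (Fintype.card (GG ℓ n)) : ℝ))) *
      (((Gkset ℓ n k).card : ℝ)⁻¹ * ∑ z ∈ Gkset ℓ n k, Tsum f z) := by
  rw [ipFormG_eq_sum]
  congr 1
  rw [Finset.mul_sum, Gkset, Finset.sum_filter]
  apply Finset.sum_congr rfl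
  intro z _
  rw [rho]
  by_cases h : suppCard z = k <;> simp [h, Gkset, one_div]

lemma ipFormG_rho_nonneg (k : ℕ) (f : Equiv.Perm (GG ℓ n) → ℝ) :
    0 ≤ ipFormG ℓ n (rho ℓ n k) f := by
  rw [ipFormG_rho_eq]
  apply mul_nonneg (by positivity)
  apply mul_nonneg (by positivity)
  exact Finset.sum_nonneg fun z _ => Tsum_nonneg f z

lemma ipFormG_rho_zero (f : Equiv.Perm (GG ℓ n) → ℝ) :
    ipFormG ℓ n (rho ℓ n 0) f = 0 := by
  rw [ipFormG_rho_eq]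
  have : ∑ z ∈ Gkset ℓ n 0, Tsum f z = 0 := by
    apply Finset.sum_eq_zero
    intro z hz
    rw [suppCard_eq_zero.mp (mem_Gkset.mp hz)]
    exact Tsum_zero f
  rw [this]
  ring

end AuxForm


theorem stmt19 (ℓ n : ℕ) [NeZero ℓ] (hℓ : 2 ≤ ℓ) (hn : 1 ≤ n)
    (i j : ℕ) (hi : i ≤ n) (hj : j ≤ n) (hij : i + j ≤ n) :
    ∀ f : Equiv.Perm (GG ℓ n) → ℝ,
      ipFormG ℓ n (rho ℓ n (i + j)) f ≤
        (8 * (GkCard ℓ n i : ℝ) / (min (GkCard ℓ n i : ℝ) (GkCard ℓ n j : ℝ))) *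
            ipFormG ℓ n (rho ℓ n i) f +
          (8 * (GkCard ℓ n j : ℝ) / (min (GkCard ℓ n i : ℝ) (GkCard ℓ n j : ℝ))) *
            ipFormG ℓ n (rho ℓ n j) f := by
  intro f
  have hGk : ∀ k : ℕ, GkCard ℓ n k = (Gkset ℓ n k).card := fun _ => rfl
  have hgi : (0 : ℝ) < (GkCard ℓ n i : ℝ) := by
    rw [hGk]
    exact_mod_cast Finset.card_pos.mpr (Gkset_nonempty hℓ hi)
  have hgj : (0 : ℝ) < (GkCard ℓ n j : ℝ) := by
    rw [hGk]
    exact_mod_cast Finset.card_pos.mpr (Gkset_nonempty hℓ hj)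
  set gi : ℝ := (GkCard ℓ n i : ℝ)
  set gj : ℝ := (GkCard ℓ n j : ℝ)
  have hm : (0 : ℝ) < min gi gj := lt_min hgi hgj
  have hAi : (8 : ℝ) ≤ 8 * gi / min gi gj := by
    rw [le_div_iff₀ hm]
    have : min gi gj ≤ gi := min_le_left _ _
    nlinarith
  have hAj : (8 : ℝ) ≤ 8 * gj / min gi gj := by
    rw [le_div_iff₀ hm]
    have : min gi gj ≤ gj := min_le_right _ _
    nlinarith
  have hEi : 0 ≤ ipFormG ℓ n (rho ℓ n i) f := ipFormG_rho_nonneg i f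
  have hEj : 0 ≤ ipFormG ℓ n (rho ℓ n j) f := ipFormG_rho_nonneg j f
  rcases Nat.eq_zero_or_pos i with hi0 | hi1
  · subst hi0
    rw [Nat.zero_add]
    have hzero : ipFormG ℓ n (rho ℓ n 0) f = 0 := ipFormG_rho_zero f
    rw [hzero, mul_zero, zero_add]
    nlinarith
  rcases Nat.eq_zero_or_pos j with hj0 | hj1
  · subst hj0
    rw [Nat.add_zero]
    have hzero : ipFormG ℓ n (rho ℓ n 0) f = 0 := ipFormG_rho_zero f
    rw [hzero, mul_zero, add_zero]
    nlinarith
  -- main case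
  have hmain := main_ineq hℓ hi1 hj1 hij f
  have hc0 : (0 : ℝ) ≤ 1 / (2 * (Nat.factorial (Fintype.card (GG ℓ n)) : ℝ)) := by positivity
  have h6 : ipFormG ℓ n (rho ℓ n (i + j)) f
      ≤ 6 * ipFormG ℓ n (rho ℓ n i) f + 3 * ipFormG ℓ n (rho ℓ n j) f := by
    rw [ipFormG_rho_eq, ipFormG_rho_eq, ipFormG_rho_eq]
    set c0 : ℝ := 1 / (2 * (Nat.factorial (Fintype.card (GG ℓ n)) : ℝ))
    calc c0 * (((Gkset ℓ n (i + j)).card : ℝ)⁻¹ * ∑ z ∈ Gkset ℓ n (i + j), Tsum f z)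
        ≤ c0 * (6 * (((Gkset ℓ n i).card : ℝ)⁻¹ * ∑ u ∈ Gkset ℓ n i, Tsum f u)
          + 3 * (((Gkset ℓ n j).card : ℝ)⁻¹ * ∑ v ∈ Gkset ℓ n j, Tsum f v)) :=
          mul_le_mul_of_nonneg_left hmain hc0
      _ = 6 * (c0 * (((Gkset ℓ n i).card : ℝ)⁻¹ * ∑ u ∈ Gkset ℓ n i, Tsum f u))
          + 3 * (c0 * (((Gkset ℓ n j).card : ℝ)⁻¹ * ∑ v ∈ Gkset ℓ n j, Tsum f v)) := by ring
  nlinarith [mul_le_mul_of_nonneg_right hAi hEi, mul_le_mul_of_nonneg_right hAj hEj]
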